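/- arXiv:math/0107076 — 4 statements merged into one kernel-verified Lean document; each statement's English description precedes it below -/
import Mathlib

section
/- For every k ≥ 2, the unital subalgebra of the group algebra ℂ[F_k] generated by w_1 equals the linear span of {w_n : n ≥ 0}; in particular each w_n lies in the unital subalgebra generated by w_1. -/
/-!
Common setup: `Fk k` is the free group `F_k` on `k` generators; letters of the
alphabet `S_k = {g_1,…,g_k,g_1⁻¹,…,g_k⁻¹}` are encoded as pairs in `Fin k × Bool`
(`(i, true)` is `g_{i+1}`, `(i, false)` is `g_{i+1}⁻¹`); `wlen u` is the length of the
unique reduced word representing `u`; `words k n` is the (finite) set of elements of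
length `n`; `w k n` is `w_n`, the sum of all reduced words of length `n` in the group
algebra `ℂ[F_k] = MonoidAlgebra ℂ (Fk k)`.
-/

open scoped BigOperators

noncomputable section

abbrev Fk (k : ℕ) := FreeGroup (Fin k)

/-- The length `|u|` of the unique reduced word representing `u`. -/
def wlen {k : ℕ} (u : Fk k) : ℕ := (FreeGroup.toWord u).length

/-- The `Finset` of all elements of `F_k` whose reduced word has length `n`,
realized as the images of the reduced lists of letters of length `n`. -/
def words (k n : ℕ) : Finset (Fk k) :=
  (Finset.univ.filter
      (fun v : List.Vector (Fin k × Bool) n => FreeGroup.reduce v.toList = v.toList)).image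
    (fun v => FreeGroup.mk v.toList)

/-- `w_n`: the sum of all reduced words of length `n` in the group algebra `ℂ[F_k]`. -/
def w (k n : ℕ) : MonoidAlgebra ℂ (Fk k) :=
  ∑ u ∈ words k n, MonoidAlgebra.of ℂ (Fk k) u

/-- The first letter of the reduced word representing `u` (if any). -/
def firstLetter {k : ℕ} (u : Fk k) : Option (Fin k × Bool) := (FreeGroup.toWord u).head?

/-- The last letter of the reduced word representing `u` (if any). -/
def lastLetter {k : ℕ} (u : Fk k) : Option (Fin k × Bool) := (FreeGroup.toWord u).getLast?

/-- The inverse of a letter. -/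
def linv {k : ℕ} (a : Fin k × Bool) : Fin k × Bool := (a.1, !a.2)

/-- The set of reduced words of length `n` beginning with the letter `x` and ending with
the letter `y`. -/
def wordsXY (k n : ℕ) (x y : Fin k × Bool) : Finset (Fk k) :=
  (words k n).filter (fun u => firstLetter u = some x ∧ lastLetter u = some y)

/-- `ν_n(x,y)`: the number of reduced words of length `n` beginning with `x`, ending with `y`. -/
def nu (k n : ℕ) (x y : Fin k × Bool) : ℕ := (wordsXY k n x y).card

/-- `w_n(x,y)`: the sum of all reduced words of length `n` beginning with `x` and ending
with `y`, in `ℂ[F_k]`. -/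
def wXY (k n : ℕ) (x y : Fin k × Bool) : MonoidAlgebra ℂ (Fk k) :=
  ∑ u ∈ wordsXY k n x y, MonoidAlgebra.of ℂ (Fk k) u

/-- `ν_n(σ,τ)`: the number of reduced words of length `n` whose first letter lies in `σ`
and whose last letter lies in `τ`. -/
def nuS (k n : ℕ) (σ τ : Finset (Fin k × Bool)) : ℕ :=
  ((words k n).filter
    (fun u => (∃ a ∈ σ, firstLetter u = some a) ∧ (∃ b ∈ τ, lastLetter u = some b))).card

/-- The inner product `⟨a,b⟩ = Σ_g a_g conj(b_g)` on a group algebra. -/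
def inn {Γ : Type*} [Group Γ] (a b : MonoidAlgebra ℂ Γ) : ℂ :=
  ∑ g ∈ a.coeff.support, a.coeff g * (starRingEnd ℂ) (b.coeff g)

/-- `‖a‖₂² = ⟨a,a⟩ = Σ_g |a_g|²`. -/
def n2sq {Γ : Type*} [Group Γ] (a : MonoidAlgebra ℂ Γ) : ℝ :=
  ∑ g ∈ a.coeff.support, Complex.normSq (a.coeff g)

/-- `‖a‖₂ = ⟨a,a⟩^{1/2}`. -/
def n2 {Γ : Type*} [Group Γ] (a : MonoidAlgebra ℂ Γ) : ℝ := Real.sqrt (n2sq a)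

/-- The conditional expectation onto the Laplacian masa, restricted to `ℂ[F_k]`:
`E(a) = Σ_{n ≥ 0} (⟨a,w_n⟩ / ‖w_n‖₂²) w_n` (a finite sum for each `a`). -/
def Ee {k : ℕ} (a : MonoidAlgebra ℂ (Fk k)) : MonoidAlgebra ℂ (Fk k) :=
  ∑ᶠ n : ℕ, (inn a (w k n) / (n2sq (w k n) : ℂ)) • w k n

/-!
Multiplying a reduced word on the left by a letter `a` either cancels its first letter (when that
letter is `a⁻¹`) or prepends `a`. Counting the letters of each kind gives the three-term recursion
`w₁ wₙ₊₁ = wₙ₊₂ + (2k - 1) wₙ` for `n ≥ 1`, and `w₁² = w₂ + 2k`. Hence every `wₙ` is a polynomial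
in `w₁`, and multiplication by `w₁` preserves the span of the `wₙ`, which therefore contains all
powers of `w₁`.
-/

namespace FreeGroup

open Finset

variable {α : Type*} [DecidableEq α]

theorem toWord_mk_singleton_mul (a : α × Bool) (g : FreeGroup α) :
    (mk [a] * g).toWord =
      if g.toWord.head? = some (a.1, !a.2) then g.toWord.tail else a :: g.toWord := by
  rw [← mk_toWord (x := g), mul_mk, toWord_mk, List.singleton_append, reduce.cons,
    reduce_toWord, toWord_mk, reduce_toWord]
  rcases g.toWord with _ | ⟨b, t⟩
  · rfl
  · obtain ⟨a1, a2⟩ := a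
    obtain ⟨b1, b2⟩ := b
    by_cases h : a1 = b1 <;> cases a2 <;> cases b2 <;> simp [h, eq_comm]

theorem norm_inv_mk_singleton_mul (a : α × Bool) (g : FreeGroup α) :
    norm ((mk [a])⁻¹ * g) = if g.toWord.head? = some a then norm g - 1 else norm g + 1 := by
  rw [inv_mk, norm, invRev, List.map_singleton, List.reverse_singleton,
    toWord_mk_singleton_mul]
  simp only [Bool.not_not, Prod.mk.eta]
  split_ifs <;> simp [norm]

theorem card_filter_norm_inv_mk_singleton_mul [Fintype α] (g : FreeGroup α) (n : ℕ) :
    #{a | norm ((mk [a])⁻¹ * g) = n + 1} =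
      (if norm g = n + 2 then 1 else 0) +
        if norm g = n then (if n = 0 then 2 * Fintype.card α else 2 * Fintype.card α - 1)
        else 0 := by
  have hcard : Fintype.card (α × Bool) = 2 * Fintype.card α := by
    rw [Fintype.card_prod, Fintype.card_bool, mul_comm]
  simp only [norm_inv_mk_singleton_mul]
  rcases hg : g.toWord with _ | ⟨h, t⟩
  · have hg1 : norm g = 0 := by simp [norm, hg]
    rcases n with _ | n <;> simp [hg1, hcard]
  have hng : norm g = t.length + 1 := by simp [norm, hg]
  simp only [List.head?_cons, Option.some.injEq, hng, add_tsub_cancel_right]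
  by_cases hlong : t.length = n + 1
  · have hfilter :
        ({a | (if h = a then t.length else t.length + 2) = n + 1} : Finset _) = {h} := by
      ext a; by_cases ha : h = a <;> simp [ha, hlong, eq_comm]
    rw [hfilter, card_singleton, if_pos (by omega), if_neg (by omega), add_zero]
  by_cases hshort : t.length + 1 = n
  · have hfilter : ({a | (if h = a then t.length else t.length + 2) = n + 1} : Finset _) =
        univ.erase h := by
      ext a
      rcases eq_or_ne h a with rfl | ha
      · simp; omega
      · simp [ha, ha.symm]; omega
    rw [hfilter, card_erase_of_mem (mem_univ h), card_univ, hcard, if_neg (by omega),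
      if_pos (by omega), if_neg (by omega), zero_add]
  · have hfilter :
        ({a | (if h = a then t.length else t.length + 2) = n + 1} : Finset _) = ∅ := by
      ext a; by_cases ha : h = a <;> simp [ha] <;> omega
    rw [hfilter, card_empty, if_neg (by omega), if_neg (by omega)]

end FreeGroup

section

open FreeGroup MonoidAlgebra

variable {k : ℕ}

theorem mem_words {n : ℕ} {u : Fk k} : u ∈ words k n ↔ wlen u = n := by
  simp only [words, Finset.mem_image, Finset.mem_filter, Finset.mem_univ, true_and]
  constructor
  · rintro ⟨v, hv, rfl⟩
    rw [wlen, toWord_mk, hv, v.toList_length]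
  · intro h
    exact ⟨⟨toWord u, h⟩, reduce_toWord u, mk_toWord⟩

theorem coeff_w (n : ℕ) (g : Fk k) : (w k n).coeff g = if FreeGroup.norm g = n then 1 else 0 := by
  simp only [w, of_apply, coeff_sum, Finset.sum_apply', coeff_single, Finsupp.single_apply,
    Finset.sum_ite_eq', mem_words]
  rfl

theorem w_zero : w k 0 = 1 := by
  ext g
  rw [coeff_w, one_def, coeff_single, Finsupp.single_apply]
  simp only [FreeGroup.norm_eq_zero, eq_comm]

theorem w_one : w k 1 = ∑ a : Fin k × Bool, single (mk [a]) 1 := by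
  ext g
  have hmk : ∀ a : Fin k × Bool, mk [a] = g ↔ g.toWord = [a] := fun a => by
    rw [← toWord_inj, toWord_mk, reduce_singleton, eq_comm]
  simp only [coeff_w, coeff_sum, Finset.sum_apply', coeff_single, Finsupp.single_apply, hmk,
    Finset.sum_boole]
  by_cases hg : FreeGroup.norm g = 1
  · obtain ⟨b, hb⟩ := List.length_eq_one_iff.mp hg
    simp [hb, hg, Finset.filter_eq]
  · have hne : ∀ a, g.toWord ≠ [a] := fun a ha => hg (by simp [FreeGroup.norm, ha])
    simp [hne, hg]

theorem w_one_mul_w_succ (n : ℕ) :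
    w k 1 * w k (n + 1) =
      w k (n + 2) + (if n = 0 then 2 * k else 2 * k - 1) • w k n := by
  ext g
  simp only [w_one, Finset.sum_mul, coeff_sum, Finset.sum_apply', coeff_single_mul_apply, coeff_w,
    one_mul, coeff_add, Finsupp.add_apply, coeff_smul, Finsupp.smul_apply, Finset.sum_boole]
  rw [card_filter_norm_inv_mk_singleton_mul, Fintype.card_fin]
  push_cast
  split_ifs <;> simp

theorem w_mem_adjoin_w_one (n : ℕ) : w k n ∈ Algebra.adjoin ℂ {w k 1} := by
  induction n using Nat.twoStepInduction with
  | zero => rw [w_zero]; exact one_mem _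
  | one => exact Algebra.self_mem_adjoin_singleton ℂ _
  | more n hn hn1 =>
    rw [eq_sub_of_add_eq (w_one_mul_w_succ n).symm]
    exact sub_mem (mul_mem (Algebra.self_mem_adjoin_singleton ℂ _) hn1) (nsmul_mem hn _)

theorem span_range_w_le_comap_mulLeft :
    Submodule.span ℂ (Set.range (w k)) ≤
      (Submodule.span ℂ (Set.range (w k))).comap (LinearMap.mulLeft ℂ (w k 1)) := by
  rw [Submodule.span_le]
  rintro _ ⟨n, rfl⟩
  rw [SetLike.mem_coe, Submodule.mem_comap, LinearMap.mulLeft_apply]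
  have hw : ∀ m, w k m ∈ Submodule.span ℂ (Set.range (w k)) := fun m =>
    Submodule.subset_span (Set.mem_range_self m)
  cases n with
  | zero => rw [w_zero, mul_one]; exact hw 1
  | succ n => rw [w_one_mul_w_succ]; exact add_mem (hw (n + 2)) (nsmul_mem (hw n) _)

theorem w_one_pow_mem_span (m : ℕ) : w k 1 ^ m ∈ Submodule.span ℂ (Set.range (w k)) := by
  induction m with
  | zero => rw [pow_zero, ← w_zero]; exact Submodule.subset_span (Set.mem_range_self 0)
  | succ m ih => rw [pow_succ']; exact span_range_w_le_comap_mulLeft ih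

end

theorem adjoin_w_one_eq_span_general (k : ℕ) :
    Subalgebra.toSubmodule (Algebra.adjoin ℂ {w k 1}) =
      Submodule.span ℂ (Set.range (w k)) ∧
    ∀ n : ℕ, w k n ∈ Algebra.adjoin ℂ {w k 1} := by
  refine ⟨le_antisymm ?_ ?_, w_mem_adjoin_w_one⟩
  · rw [Algebra.adjoin_eq_span, Submodule.span_le]
    intro x hx
    obtain ⟨m, rfl⟩ := Submonoid.mem_closure_singleton.mp hx
    exact w_one_pow_mem_span m
  · exact Submodule.span_le.mpr (Set.range_subset_iff.mpr w_mem_adjoin_w_one)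

/-- for `k ≥ 2`, the unital subalgebra of `ℂ[F_k]` generated by `w_1` equals
the linear span of `{w_n : n ≥ 0}`; in particular each `w_n` lies in the unital
subalgebra generated by `w_1`. -/
theorem adjoin_w_one_eq_span (k : ℕ) (hk : 2 ≤ k) :
    Subalgebra.toSubmodule (Algebra.adjoin ℂ {w k 1}) =
      Submodule.span ℂ (Set.range (w k)) ∧
    ∀ n : ℕ, w k n ∈ Algebra.adjoin ℂ {w k 1} :=
  adjoin_w_one_eq_span_general k

end
end

section
/- For every k ≥ 2 and every n ≥ 2: β_n = γ_n + 1 and α_n = γ_n + (1 + (−1)^n)/2 (i.e. α_n = γ_n + 1 if n is even and α_n = γ_n if n is odd); in particular |α_n − γ_n| ≤ 1 and |α_n − β_n| ≤ 2. -/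
/-!
Common setup: `Fk k` is the free group `F_k` on `k` generators; letters of the
alphabet `S_k = {g_1,…,g_k,g_1⁻¹,…,g_k⁻¹}` are encoded as pairs in `Fin k × Bool`
(`(i, true)` is `g_{i+1}`, `(i, false)` is `g_{i+1}⁻¹`); `wlen u` is the length of the
unique reduced word representing `u`; `words k n` is the (finite) set of elements of
length `n`; `w k n` is `w_n`, the sum of all reduced words of length `n` in the group
algebra `ℂ[F_k] = MonoidAlgebra ℂ (Fk k)`.
-/

open scoped BigOperators

noncomputable section

/-- `α_n = ν_n(g₁,g₂)`. -/
def alph (k n : ℕ) (hk : 2 ≤ k) : ℕ :=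
  nu k n ((⟨0, by omega⟩ : Fin k), true) ((⟨1, by omega⟩ : Fin k), true)

/-- `β_n = ν_n(g₁,g₁)`. -/
def bet (k n : ℕ) (hk : 2 ≤ k) : ℕ :=
  nu k n ((⟨0, by omega⟩ : Fin k), true) ((⟨0, by omega⟩ : Fin k), true)

/-- `γ_n = ν_n(g₁,g₁⁻¹)`. -/
def gam (k n : ℕ) (hk : 2 ≤ k) : ℕ :=
  nu k n ((⟨0, by omega⟩ : Fin k), true) ((⟨0, by omega⟩ : Fin k), false)

/-
Deleting the last letter maps the reduced words of length `n + 1` from `x` to `y` bijectively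
onto the reduced words of length `n` starting with `x` that do not end with `y⁻¹`. Hence
`ν_{n+1}(x, y) + ν_n(x, y⁻¹)` depends only on `x` and `n`. Taking `y = x` and `y = x⁻¹` shows
that `β_n - γ_n` is constant, equal to `β_1 - γ_1 = 1`. Changing the sign of `g_2` is a symmetry
fixing `g_1`, so `ν_n(g_1, g_2⁻¹) = α_n`; therefore `α_{n+1} - γ_{n+1} = 1 - (α_n - γ_n)`,
starting from `α_1 - γ_1 = 0`.
-/

namespace FreeGroup

open Finset

variable {α : Type*}

theorem isReduced_append_singleton {L : List (α × Bool)} {y : α × Bool} :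
    IsReduced (L ++ [y]) ↔ IsReduced L ∧ L.getLast? ≠ some (y.1, !y.2) := by
  rw [IsReduced, List.isChain_append]
  simp only [List.isChain_singleton, List.head?_cons, Option.mem_some_iff, true_and]
  refine and_congr_right fun _ => ?_
  rcases L.getLast? with _ | ⟨i, s⟩
  · simp
  · obtain ⟨j, t⟩ := y
    cases s <;> cases t <;> simp

theorem isReduced_map_prodCongrRight (σ : α → Equiv.Perm Bool) {L : List (α × Bool)} :
    IsReduced (L.map (Equiv.prodCongrRight σ)) ↔ IsReduced L := by
  have hrel : (fun a b : α × Bool =>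
      (Equiv.prodCongrRight σ a).1 = (Equiv.prodCongrRight σ b).1 →
        (Equiv.prodCongrRight σ a).2 = (Equiv.prodCongrRight σ b).2) =
      fun a b => a.1 = b.1 → a.2 = b.2 := by
    funext ⟨i, s⟩ ⟨j, t⟩
    simp only [Equiv.prodCongrRight_apply]
    refine propext ⟨fun h hij => ?_, fun h hij => ?_⟩
    · subst hij; exact (σ i).injective (h rfl)
    · subst hij; rw [h rfl]
  rw [IsReduced, List.isChain_map, hrel, IsReduced]

variable [DecidableEq α]

instance : DecidablePred (IsReduced : List (α × Bool) → Prop) :=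
  fun L => inferInstanceAs (Decidable (L.IsChain _))

variable [Fintype α]

variable (α) in
def reducedWords (n : ℕ) : Finset (List (α × Bool)) :=
  ((univ : Finset (List.Vector (α × Bool) n)).image List.Vector.toList).filter IsReduced

def reducedWordsFrom (n : ℕ) (x : α × Bool) : Finset (List (α × Bool)) :=
  (reducedWords α n).filter (·.head? = some x)

def reducedWordsFromTo (n : ℕ) (x y : α × Bool) : Finset (List (α × Bool)) :=
  (reducedWordsFrom n x).filter (·.getLast? = some y)

theorem mem_reducedWords {n : ℕ} {L : List (α × Bool)} :
    L ∈ reducedWords α n ↔ L.length = n ∧ IsReduced L := by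
  simp only [reducedWords, mem_filter, mem_image, mem_univ, true_and]
  exact and_congr_left' ⟨fun ⟨v, hv⟩ => hv ▸ v.toList_length, fun h => ⟨⟨L, h⟩, rfl⟩⟩

theorem mem_reducedWordsFromTo {n : ℕ} {x y : α × Bool} {L : List (α × Bool)} :
    L ∈ reducedWordsFromTo n x y ↔
      L.length = n ∧ IsReduced L ∧ L.head? = some x ∧ L.getLast? = some y := by
  simp only [reducedWordsFromTo, reducedWordsFrom, mem_filter, mem_reducedWords, and_assoc]

theorem card_reducedWordsFromTo_one (x y : α × Bool) :
    #(reducedWordsFromTo 1 x y) = if x = y then 1 else 0 := by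
  have hone : reducedWordsFromTo 1 x y = if x = y then {[x]} else ∅ := by
    ext L
    rw [mem_reducedWordsFromTo]
    constructor
    · rintro ⟨hlen, -, hhead, hlast⟩
      obtain ⟨a, rfl⟩ := List.length_eq_one_iff.mp hlen
      simp_all
    · intro hL
      split_ifs at hL with hxy
      · simp [mem_singleton.mp hL, hxy]
      · simp at hL
  rw [hone]
  split_ifs <;> rfl

theorem append_singleton_mem_reducedWordsFromTo {n : ℕ} (hn : n ≠ 0) {x y : α × Bool}
    {L : List (α × Bool)} :
    L ++ [y] ∈ reducedWordsFromTo (n + 1) x y ↔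
      L ∈ reducedWordsFrom n x ∧ L.getLast? ≠ some (y.1, !y.2) := by
  simp only [mem_reducedWordsFromTo, reducedWordsFrom, mem_filter, mem_reducedWords,
    isReduced_append_singleton, List.length_append, List.length_singleton,
    Nat.add_right_cancel_iff, List.getLast?_concat, and_true]
  constructor
  · rintro ⟨hL, ⟨hred, hlast⟩, hhead⟩
    rw [List.head?_append_of_ne_nil _ (List.ne_nil_of_length_pos (by omega))] at hhead
    exact ⟨⟨⟨hL, hred⟩, hhead⟩, hlast⟩
  · rintro ⟨⟨⟨hL, hred⟩, hhead⟩, hlast⟩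
    refine ⟨hL, ⟨hred, hlast⟩, ?_⟩
    rwa [List.head?_append_of_ne_nil _ (List.ne_nil_of_length_pos (by omega))]

theorem card_reducedWordsFromTo_succ_add {n : ℕ} (hn : n ≠ 0) (x y : α × Bool) :
    #(reducedWordsFromTo (n + 1) x y) + #(reducedWordsFromTo n x (y.1, !y.2)) =
      #(reducedWordsFrom n x) := by
  have hsplit := card_filter_add_card_filter_not (s := reducedWordsFrom n x)
    (p := (·.getLast? = some (y.1, !y.2)))
  have hbij : #(reducedWordsFromTo (n + 1) x y) =
      #((reducedWordsFrom n x).filter (·.getLast? ≠ some (y.1, !y.2))) := by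
    have hsnoc {M} (hM : M ∈ reducedWordsFromTo (n + 1) x y) : M.dropLast ++ [y] = M :=
      List.dropLast_append_getLast? _ (mem_reducedWordsFromTo.mp hM).2.2.2
    refine card_nbij' List.dropLast (· ++ [y]) (fun M hM => ?_)
      (fun L hL => (append_singleton_mem_reducedWordsFromTo hn).mpr (mem_filter.mp hL))
      (fun M hM => hsnoc hM) (fun L _ => List.dropLast_concat)
    rw [mem_coe, ← hsnoc hM, append_singleton_mem_reducedWordsFromTo hn] at hM
    exact mem_filter.mpr hM
  rw [hbij, add_comm]
  exact hsplit

theorem card_reducedWordsFromTo_prodCongrRight (σ : α → Equiv.Perm Bool) (n : ℕ)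
    (x y : α × Bool) :
    #(reducedWordsFromTo n (Equiv.prodCongrRight σ x) (Equiv.prodCongrRight σ y)) =
      #(reducedWordsFromTo n x y) := by
  refine (card_equiv (Equiv.listEquivOfEquiv (Equiv.prodCongrRight σ)) fun L => ?_).symm
  simp [Equiv.listEquivOfEquiv, mem_reducedWordsFromTo, isReduced_map_prodCongrRight,
    List.head?_map, List.getLast?_map]

theorem card_reducedWordsFromTo_self {n : ℕ} (hn : n ≠ 0) (x : α × Bool) :
    #(reducedWordsFromTo n x x) = #(reducedWordsFromTo n x (x.1, !x.2)) + 1 := by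
  induction n, Nat.one_le_iff_ne_zero.mpr hn using Nat.le_induction with
  | base => simp [card_reducedWordsFromTo_one, Prod.ext_iff]
  | succ n hn ih =>
    have hx := card_reducedWordsFromTo_succ_add (n := n) (by omega) x x
    have hx' := card_reducedWordsFromTo_succ_add (n := n) (by omega) x (x.1, !x.2)
    simp only [Bool.not_not, Prod.mk.eta] at hx'
    have := ih (by omega)
    omega

theorem card_reducedWordsFromTo_of_fst_ne {n : ℕ} (hn : n ≠ 0) {x y : α × Bool}
    (hxy : x.1 ≠ y.1) :
    #(reducedWordsFromTo n x y) =
      #(reducedWordsFromTo n x (x.1, !x.2)) + if Even n then 1 else 0 := by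
  induction n, Nat.one_le_iff_ne_zero.mpr hn using Nat.le_induction with
  | base => simp [card_reducedWordsFromTo_one, hxy, Prod.ext_iff]
  | succ n hn ih =>
    have hy := card_reducedWordsFromTo_succ_add (n := n) (by omega) x y
    have hx := card_reducedWordsFromTo_succ_add (n := n) (by omega) x (x.1, !x.2)
    simp only [Bool.not_not, Prod.mk.eta] at hx
    have hself := card_reducedWordsFromTo_self (n := n) (by omega) x
    -- changing the sign of the generator `y.1` fixes `x` and swaps `y` with `y⁻¹`
    have hsymm : #(reducedWordsFromTo n x (y.1, !y.2)) = #(reducedWordsFromTo n x y) := by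
      obtain ⟨i, s⟩ := x
      obtain ⟨j, t⟩ := y
      simpa [hxy] using card_reducedWordsFromTo_prodCongrRight
        (fun l => if l = j then Equiv.boolNot else 1) n (i, s) (j, t)
    have := ih (by omega)
    simp only [Nat.even_add_one]
    split_ifs at this ⊢ <;> omega

end FreeGroup

open FreeGroup Finset

theorem image_toWord_words (k n : ℕ) : (words k n).image toWord = reducedWords (Fin k) n := by
  ext L
  simp only [words, mem_image, mem_filter, mem_univ, true_and, mem_reducedWords]
  constructor
  · rintro ⟨_, ⟨v, hv, rfl⟩, rfl⟩
    rw [toWord_mk, hv]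
    exact ⟨v.toList_length, isReduced_iff_reduce_eq.mpr hv⟩
  · rintro ⟨hlen, hred⟩
    exact ⟨FreeGroup.mk L, ⟨⟨L, hlen⟩, hred.reduce_eq, rfl⟩, by rw [toWord_mk, hred.reduce_eq]⟩

theorem nu_eq_card_reducedWordsFromTo (k n : ℕ) (x y : Fin k × Bool) :
    nu k n x y = #(reducedWordsFromTo n x y) := by
  calc nu k n x y = #((wordsXY k n x y).image toWord) :=
        (card_image_of_injective _ toWord_injective).symm
    _ = #(((words k n).image toWord).filter
          fun L => L.head? = some x ∧ L.getLast? = some y) := by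
        rw [filter_image]; rfl
    _ = #(reducedWordsFromTo n x y) := by
        rw [image_toWord_words, reducedWordsFromTo, reducedWordsFrom, filter_filter]

/-- for `k ≥ 2` and `n ≥ 2`: `β_n = γ_n + 1` and
`α_n = γ_n + (1 + (-1)^n)/2` (that is `α_n = γ_n + 1` for even `n` and `α_n = γ_n` for
odd `n`); in particular `|α_n - γ_n| ≤ 1` and `|α_n - β_n| ≤ 2`. -/
theorem greek_differences (k : ℕ) (hk : 2 ≤ k) (n : ℕ) (hn : 2 ≤ n) :
    bet k n hk = gam k n hk + 1 ∧
    (alph k n hk : ℤ) = gam k n hk + (1 + (-1) ^ n) / 2 ∧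
    (Even n → alph k n hk = gam k n hk + 1) ∧
    (Odd n → alph k n hk = gam k n hk) ∧
    |(alph k n hk : ℤ) - gam k n hk| ≤ 1 ∧
    |(alph k n hk : ℤ) - bet k n hk| ≤ 2 := by
  have hb : bet k n hk = gam k n hk + 1 := by
    rw [bet, gam, nu_eq_card_reducedWordsFromTo, nu_eq_card_reducedWordsFromTo]
    exact card_reducedWordsFromTo_self (by omega) _
  have ha : alph k n hk = gam k n hk + if Even n then 1 else 0 := by
    rw [alph, gam, nu_eq_card_reducedWordsFromTo, nu_eq_card_reducedWordsFromTo]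
    exact card_reducedWordsFromTo_of_fst_ne (by omega) (by simp)
  rcases Nat.even_or_odd n with he | ho
  · rw [if_pos he] at ha
    refine ⟨hb, ?_, fun _ => ha, fun ho => (Nat.not_odd_iff_even.mpr he ho).elim, ?_, ?_⟩ <;>
      simp [ha, hb, he.neg_one_pow]
  · rw [if_neg (Nat.not_even_iff_odd.mpr ho)] at ha
    refine ⟨hb, ?_, fun he => (Nat.not_even_iff_odd.mpr ho he).elim, fun _ => ha, ?_, ?_⟩ <;>
      simp [ha, hb, ho.neg_one_pow]

end
end

section
/- For every k ≥ 2, with C_k = 2 + 3/(2k), the following bounds hold for all n ≥ 2: |α_n − (2k−1)^{n−1}/(2k)| ≤ C_k, |β_n − (2k−1)^{n−1}/(2k)| ≤ C_k, and |γ_n − (2k−1)^{n−1}/(2k)| ≤ C_k. -/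
/-!
Common setup: `Fk k` is the free group `F_k` on `k` generators; letters of the
alphabet `S_k = {g_1,…,g_k,g_1⁻¹,…,g_k⁻¹}` are encoded as pairs in `Fin k × Bool`
(`(i, true)` is `g_{i+1}`, `(i, false)` is `g_{i+1}⁻¹`); `wlen u` is the length of the
unique reduced word representing `u`; `words k n` is the (finite) set of elements of
length `n`; `w k n` is `w_n`, the sum of all reduced words of length `n` in the group
algebra `ℂ[F_k] = MonoidAlgebra ℂ (Fk k)`.
-/

open scoped BigOperators

noncomputable section

/-!
Deleting the first letter `x` of a reduced word of length `m + 2` that ends in `y` leaves a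
reduced word of length `m + 1` ending in `y` whose first letter is not `x⁻¹`, and every such word
arises. There are `(2k - 1)^m` reduced words of length `m + 1` ending in `y`, so
`ν_{m+2}(x, y) + ν_{m+1}(x⁻¹, y) = (2k - 1)^m`, i.e. the error
`ν_{m+1}(x, y) - (2k - 1)^m / (2k)` only changes sign when `m` grows by one and `x` is replaced
by `x⁻¹`. For `m = 0` the error is `[x = y] - 1/(2k)`, of absolute value at most `1 ≤ C_k`, and
hence so is it for every `m`.
-/

open Finset

namespace FreeGroup

variable {α : Type*} [DecidableEq α]

instance : DecidablePred (IsReduced (α := α)) :=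
  fun L => inferInstanceAs (Decidable (L.IsChain _))

omit [DecidableEq α] in
theorem isReduced_cons_cons_iff_ne_inv {a b : α × Bool} {L : List (α × Bool)} :
    IsReduced (a :: b :: L) ↔ b ≠ (a.1, !a.2) ∧ IsReduced (b :: L) := by
  rw [isReduced_cons_cons]
  obtain ⟨a₁, a₂⟩ := a
  obtain ⟨b₁, b₂⟩ := b
  cases a₂ <;> cases b₂ <;> simp [eq_comm]

variable [Fintype α]

def reducedTo (n : ℕ) (y : α × Bool) : Finset (List.Vector (α × Bool) n) :=
  univ.filter fun v => IsReduced v.toList ∧ v.toList.getLast? = some y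

def reducedFromTo (n : ℕ) (x y : α × Bool) : Finset (List.Vector (α × Bool) n) :=
  univ.filter fun v => IsReduced v.toList ∧ v.toList.head? = some x ∧ v.toList.getLast? = some y

theorem card_reducedFromTo_one (x y : α × Bool) :
    #(reducedFromTo 1 x y) = if x = y then 1 else 0 := by
  have hmem (v : List.Vector (α × Bool) 1) :
      v ∈ reducedFromTo 1 x y ↔ v = x ::ᵥ .nil ∧ x = y := by
    rw [List.Vector.eq_cons_iff, v.tail.eq_nil]
    simp +contextual [reducedFromTo, IsReduced.singleton, List.Vector.toList_singleton]
  split_ifs with hxy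
  · exact card_eq_one.2 ⟨x ::ᵥ .nil, by ext v; rw [hmem]; simp [hxy]⟩
  · exact card_eq_zero.2 (eq_empty_of_forall_notMem fun v => by simp [hmem, hxy])

theorem filter_head_reducedTo (m : ℕ) (y z : α × Bool) :
    (reducedTo (m + 1) y).filter (·.head = z) = reducedFromTo (m + 1) z y := by
  ext v
  simp only [reducedTo, reducedFromTo, mem_filter, mem_univ, true_and, List.Vector.head?_toList,
    Option.some_inj]
  tauto

theorem card_reducedTo_eq_sum (m : ℕ) (y : α × Bool) :
    #(reducedTo (m + 1) y) = ∑ z, #(reducedFromTo (m + 1) z y) := by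
  rw [card_eq_sum_card_fiberwise (f := List.Vector.head) (t := univ) (fun _ _ => mem_univ _)]
  simp only [filter_head_reducedTo]

theorem cons_mem_reducedFromTo {m : ℕ} {x x' y : α × Bool}
    {v : List.Vector (α × Bool) (m + 1)} :
    x' ::ᵥ v ∈ reducedFromTo (m + 2) x y ↔
      x' = x ∧ v ∈ reducedTo (m + 1) y ∧ v.head ≠ (x.1, !x.2) := by
  have hv : v.toList = v.head :: v.tail.toList := by
    rw [← List.Vector.toList_cons, v.cons_head_tail]
  simp only [reducedFromTo, reducedTo, mem_filter, mem_univ, true_and, List.Vector.toList_cons]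
  rw [hv, isReduced_cons_cons_iff_ne_inv]
  simp only [List.head?_cons, Option.some_inj, List.getLast?_cons_cons]
  constructor
  · rintro ⟨⟨hne, hred⟩, rfl, hlast⟩
    exact ⟨rfl, ⟨hred, hlast⟩, hne⟩
  · rintro ⟨rfl, ⟨hred, hlast⟩, hne⟩
    exact ⟨⟨hne, hred⟩, rfl, hlast⟩

theorem card_reducedFromTo_succ_succ (m : ℕ) (x y : α × Bool) :
    #(reducedFromTo (m + 2) x y) = #((reducedTo (m + 1) y).filter (·.head ≠ (x.1, !x.2))) := by
  refine card_nbij' List.Vector.tail (x ::ᵥ ·) (fun v hv => ?_) (fun v hv => ?_)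
    (fun v hv => ?_) (fun v _ => List.Vector.tail_cons x v)
  · rw [mem_coe, ← v.cons_head_tail, cons_mem_reducedFromTo] at hv
    simpa using hv.2
  · simp only [coe_filter, Set.mem_ofPred_eq] at hv
    exact cons_mem_reducedFromTo.2 ⟨rfl, hv⟩
  · rw [mem_coe, ← v.cons_head_tail, cons_mem_reducedFromTo] at hv
    exact hv.1 ▸ v.cons_head_tail

theorem card_reducedFromTo_add (m : ℕ) (x y : α × Bool) :
    #(reducedFromTo (m + 2) x y) + #(reducedFromTo (m + 1) (x.1, !x.2) y) =
      #(reducedTo (m + 1) y) := by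
  rw [card_reducedFromTo_succ_succ, ← filter_head_reducedTo, add_comm]
  exact card_filter_add_card_filter_not _

theorem card_reducedTo (m : ℕ) (y : α × Bool) :
    #(reducedTo (m + 1) y) = (2 * Fintype.card α - 1) ^ m := by
  induction m with
  | zero => simp [card_reducedTo_eq_sum, card_reducedFromTo_one]
  | succ m ih =>
    have hinv :
        ∑ x : α × Bool, #(reducedFromTo (m + 1) (x.1, !x.2) y) = #(reducedTo (m + 1) y) :=
      (card_reducedTo_eq_sum m y).symm ▸
        Equiv.sum_comp
          (Function.Involutive.toPerm (fun x : α × Bool => (x.1, !x.2)) fun x => by simp)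
          fun z => #(reducedFromTo (m + 1) z y)
    have hsum := Finset.sum_congr rfl fun x (_ : x ∈ univ) => card_reducedFromTo_add m x y
    rw [sum_add_distrib, hinv, sum_const, card_univ, Fintype.card_prod, Fintype.card_bool,
      smul_eq_mul, ← card_reducedTo_eq_sum, ih, mul_comm _ 2] at hsum
    rw [pow_succ, mul_comm, Nat.sub_mul, one_mul]
    omega

theorem card_reducedFromTo_sub_succ_succ (m : ℕ) (x y : α × Bool) :
    (#(reducedFromTo (m + 2) x y) : ℝ) -
        (2 * Fintype.card α - 1) ^ (m + 1) / (2 * Fintype.card α) =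
      -((#(reducedFromTo (m + 1) (x.1, !x.2) y) : ℝ) -
        (2 * Fintype.card α - 1) ^ m / (2 * Fintype.card α)) := by
  have hα : 0 < Fintype.card α := Fintype.card_pos_iff.2 ⟨y.1⟩
  have h := congrArg ((↑) : ℕ → ℝ) (card_reducedFromTo_add m x y)
  push_cast [card_reducedTo, Nat.cast_sub (by omega : 1 ≤ 2 * Fintype.card α)] at h
  have : (Fintype.card α : ℝ) ≠ 0 := by positivity
  field_simp
  linear_combination (2 * Fintype.card α : ℝ) * h

theorem abs_card_reducedFromTo_sub_le (m : ℕ) (x y : α × Bool) :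
    |(#(reducedFromTo (m + 1) x y) : ℝ) -
        (2 * Fintype.card α - 1) ^ m / (2 * Fintype.card α)| ≤ 1 := by
  induction m generalizing x with
  | zero =>
    have hα : (1 : ℝ) ≤ Fintype.card α := by exact_mod_cast Fintype.card_pos_iff.2 ⟨y.1⟩
    have hpos : 0 < 1 / (2 * Fintype.card α : ℝ) := by positivity
    have hle : 1 / (2 * Fintype.card α : ℝ) ≤ 1 := by rw [div_le_one (by positivity)]; linarith
    rw [card_reducedFromTo_one, pow_zero, abs_le]
    split_ifs <;> push_cast <;> constructor <;> linarith
  | succ m ih =>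
    rw [card_reducedFromTo_sub_succ_succ, abs_neg]
    exact ih _

end FreeGroup

open FreeGroup in
theorem nu_eq_card_reducedFromTo (k n : ℕ) (x y : Fin k × Bool) :
    nu k n x y = #(reducedFromTo n x y) := by
  have hinj : Set.InjOn (fun v : List.Vector (Fin k × Bool) n => mk v.toList)
      {v | reduce v.toList = v.toList} := fun u hu v hv huv =>
    List.Vector.toList_injective <| by
      simpa [hu.out, hv.out, toWord_mk] using congrArg toWord huv
  rw [nu, wordsXY, words, filter_image, filter_filter, card_image_of_injOn (hinj.mono ?_)]
  · refine congrArg card (filter_congr fun v _ => ?_)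
    simp only [firstLetter, lastLetter, toWord_mk, isReduced_iff_reduce_eq]
    exact and_congr_right fun h => by rw [h]
  · exact fun v hv => (mem_filter.1 hv).2.1

theorem abs_nu_sub_le_one (k m : ℕ) (x y : Fin k × Bool) :
    |(nu k (m + 1) x y : ℝ) - (2 * (k : ℝ) - 1) ^ m / (2 * k)| ≤ 1 := by
  simpa [nu_eq_card_reducedFromTo] using FreeGroup.abs_card_reducedFromTo_sub_le m x y

/-- for `k ≥ 2`, with `C_k = 2 + 3/(2k)`, for all `n ≥ 2`:
`|α_n − (2k−1)^{n−1}/(2k)| ≤ C_k`, `|β_n − (2k−1)^{n−1}/(2k)| ≤ C_k`, and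
`|γ_n − (2k−1)^{n−1}/(2k)| ≤ C_k`. -/
theorem greek_Ck_bounds (k : ℕ) (hk : 2 ≤ k) (n : ℕ) (hn : 2 ≤ n) :
    |(alph k n hk : ℝ) - (2 * (k : ℝ) - 1) ^ (n - 1) / (2 * k)| ≤ 2 + 3 / (2 * k) ∧
    |(bet k n hk : ℝ) - (2 * (k : ℝ) - 1) ^ (n - 1) / (2 * k)| ≤ 2 + 3 / (2 * k) ∧
    |(gam k n hk : ℝ) - (2 * (k : ℝ) - 1) ^ (n - 1) / (2 * k)| ≤ 2 + 3 / (2 * k) := by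
  obtain ⟨m, rfl⟩ : ∃ m, n = m + 1 := ⟨n - 1, by omega⟩
  have hC : (1 : ℝ) ≤ 2 + 3 / (2 * k) := by
    have : (0 : ℝ) ≤ 3 / (2 * k) := by positivity
    linarith
  have key (x y : Fin k × Bool) :
      |(nu k (m + 1) x y : ℝ) - (2 * (k : ℝ) - 1) ^ m / (2 * k)| ≤ 2 + 3 / (2 * k) :=
    (abs_nu_sub_le_one k m x y).trans hC
  rw [Nat.add_sub_cancel]
  exact ⟨key _ _, key _ _, key _ _⟩

end
end

section
/- With the free product notation, let x, y ∈ G with x ∉ φ(F_k) and y ∉ φ(F_k). Then for every n ≥ 0 the set χ_n = {u ∈ F_k : |u| = n and x·φ(u)·y ∈ φ(F_k)} is finite with cardinality at most (n+1)(2n+1). -/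
/-!
Common setup: `Fk k` is the free group `F_k` on `k` generators; letters of the
alphabet `S_k = {g_1,…,g_k,g_1⁻¹,…,g_k⁻¹}` are encoded as pairs in `Fin k × Bool`
(`(i, true)` is `g_{i+1}`, `(i, false)` is `g_{i+1}⁻¹`); `wlen u` is the length of the
unique reduced word representing `u`; `words k n` is the (finite) set of elements of
length `n`; `w k n` is `w_n`, the sum of all reduced words of length `n` in the group
algebra `ℂ[F_k] = MonoidAlgebra ℂ (Fk k)`.
-/

open scoped BigOperators

noncomputable section

/-!
Write `H = φ(F_k)`. An element of the free product lies in `H` exactly when every syllable of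
its normal form is a power `g_j ^ e` sitting in the factor of `g_j`. Suppose `x φ(u) y ∈ H` with
`x, y ∉ H`. Then the reduced word of `u` splits as `A · a^t · B`, where the letters of `A`
cancel one at a time against the last syllable of `x`, those of `B` against the first syllable
of `y`, and the middle block is a power of a single letter `a`; when `t ≠ 0`, the first
syllable of `φ(B) y` lies in the factor of `a`, since otherwise a syllable of `x` that is not a
power of a generator would survive in `x φ(u) y`. Cancelling against the fixed normal form of
`x` (resp. `y`) leaves no choice, so `A` and `B` are determined by their lengths and then `a`
by `B`. Thus `u` is determined by `|A| ∈ [0, n]` and the signed exponent `±t ∈ [-n, n]`.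
-/

namespace Monoid.CoprodI

section Monoid

variable {ι : Type*} [DecidableEq ι] {M : ι → Type*} [∀ i, Monoid (M i)] [∀ i, DecidableEq (M i)]

def letters (z : CoprodI M) : List (Σ i, M i) := (Word.equiv z).toList

theorem letters_prod (w : Word M) : letters w.prod = w.toList :=
  congrArg Word.toList (Word.equiv.apply_symm_apply w)

theorem letters_injective : Function.Injective (letters : CoprodI M → _) :=
  fun _ _ h => Word.equiv.injective (Word.ext h)

theorem letters_one : letters (1 : CoprodI M) = [] :=
  letters_prod Word.empty

theorem letters_eq_nil_iff {z : CoprodI M} : letters z = [] ↔ z = 1 :=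
  ⟨fun h => letters_injective (h.trans letters_one.symm), fun h => h ▸ letters_one⟩

theorem letters_of {i : ι} {a : M i} (ha : a ≠ 1) : letters (of a) = [⟨i, a⟩] := by
  simpa [Word.prod] using letters_prod ⟨[⟨i, a⟩], by simpa, List.isChain_singleton _⟩

theorem snd_ne_one_of_mem_letters {z : CoprodI M} {l : Σ i, M i} (hl : l ∈ letters z) :
    l.2 ≠ 1 :=
  (Word.equiv z).ne_one l hl

theorem isChain_letters (z : CoprodI M) : (letters z).IsChain fun l l' => l.1 ≠ l'.1 :=
  (Word.equiv z).chain_ne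

theorem letters_mul {z₁ z₂ : CoprodI M}
    (h : ∀ a ∈ (letters z₁).getLast?, ∀ b ∈ (letters z₂).head?, a.1 ≠ b.1) :
    letters (z₁ * z₂) = letters z₁ ++ letters z₂ := by
  let w : Word M := ⟨letters z₁ ++ letters z₂,
    fun l hl => (List.mem_append.1 hl).elim snd_ne_one_of_mem_letters snd_ne_one_of_mem_letters,
    (isChain_letters z₁).append (isChain_letters z₂) h⟩
  have hw : w.prod = z₁ * z₂ := by
    simp only [w, Word.prod, List.map_append, List.prod_append]
    exact congrArg₂ (· * ·) (Word.equiv.symm_apply_apply z₁) (Word.equiv.symm_apply_apply z₂)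
  rw [← hw, letters_prod]

theorem exists_mul_of_letters_eq_append {z : CoprodI M} {T₁ T₂ : List (Σ i, M i)}
    (h : letters z = T₁ ++ T₂) :
    ∃ z₁ z₂, letters z₁ = T₁ ∧ letters z₂ = T₂ ∧ z = z₁ * z₂ := by
  have hch := isChain_letters z
  rw [h] at hch
  let w₁ : Word M := ⟨T₁, fun _ hl => snd_ne_one_of_mem_letters (h ▸ List.mem_append_left _ hl),
    hch.left_of_append⟩
  let w₂ : Word M := ⟨T₂, fun _ hl => snd_ne_one_of_mem_letters (h ▸ List.mem_append_right _ hl),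
    hch.right_of_append⟩
  refine ⟨w₁.prod, w₂.prod, letters_prod w₁, letters_prod w₂, ?_⟩
  rw [← Word.equiv.symm_apply_apply z]
  change Word.prod _ = _
  simp only [Word.prod, ← List.prod_append, ← List.map_append]
  exact congrArg (fun L => (L.map fun l => of l.2).prod) h

theorem letters_mul_of_append {z : CoprodI M} {i : ι} {a : M i} (ha : a ≠ 1)
    (h : ∀ l ∈ (letters z).getLast?, l.1 ≠ i) :
    letters (z * of a) = letters z ++ [⟨i, a⟩] := by
  rw [letters_mul (by simpa [letters_of ha] using h), letters_of ha]

theorem letters_mul_of_merge {z : CoprodI M} {T : List (Σ i, M i)} {i : ι} {h a : M i}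
    (hz : letters z = T ++ [⟨i, h⟩]) (ha : h * a ≠ 1) :
    letters (z * of a) = T ++ [⟨i, h * a⟩] := by
  have hlast : ∀ l ∈ T.getLast?, l.1 ≠ i := by
    have := isChain_letters z
    rw [hz] at this
    exact fun l hl => (List.isChain_append.1 this).2.2 l hl _ rfl
  have hh : h ≠ 1 := snd_ne_one_of_mem_letters (z := z) (l := ⟨i, h⟩) (by simp [hz])
  obtain ⟨z₁, z₂, hz₁, hz₂, rfl⟩ := exists_mul_of_letters_eq_append hz
  obtain rfl := letters_injective (hz₂.trans (letters_of hh).symm)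
  rw [mul_assoc, ← map_mul, letters_mul_of_append ha (hz₁ ▸ hlast), hz₁]

theorem letters_of_mul_cons {z : CoprodI M} {i : ι} {a : M i} (ha : a ≠ 1)
    (h : ∀ l ∈ (letters z).head?, l.1 ≠ i) :
    letters (of a * z) = ⟨i, a⟩ :: letters z := by
  rw [letters_mul (by simpa [letters_of ha] using fun l hl => (h l hl).symm), letters_of ha]
  rfl

theorem exists_of_mul_of_letters_eq_cons {z : CoprodI M} {T : List (Σ i, M i)} {i : ι}
    {h : M i} (hz : letters z = ⟨i, h⟩ :: T) :
    ∃ z', letters z' = T ∧ z = of h * z' ∧ ∀ l ∈ T.head?, l.1 ≠ i := by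
  have hh : h ≠ 1 := snd_ne_one_of_mem_letters (z := z) (l := ⟨i, h⟩) (by simp [hz])
  have hhead : ∀ l ∈ T.head?, l.1 ≠ i := by
    have := isChain_letters z
    rw [hz] at this
    exact fun l hl => ((List.isChain_cons.1 this).1 l hl).symm
  obtain ⟨z₁, z', hz₁, hz', rfl⟩ := exists_mul_of_letters_eq_append (T₁ := [⟨i, h⟩]) hz
  obtain rfl := letters_injective (hz₁.trans (letters_of hh).symm)
  exact ⟨z', hz', rfl, hhead⟩

theorem letters_of_mul_merge {z : CoprodI M} {T : List (Σ i, M i)} {i : ι} {h a : M i}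
    (hz : letters z = ⟨i, h⟩ :: T) (ha : a * h ≠ 1) :
    letters (of a * z) = ⟨i, a * h⟩ :: T := by
  obtain ⟨z', hz', rfl, hhead⟩ := exists_of_mul_of_letters_eq_cons hz
  rw [← mul_assoc, ← map_mul, letters_of_mul_cons ha (hz' ▸ hhead), hz']

theorem letters_of_mul_cancel {z : CoprodI M} {T : List (Σ i, M i)} {i : ι} {h a : M i}
    (hz : letters z = ⟨i, h⟩ :: T) (ha : a * h = 1) : letters (of a * z) = T := by
  obtain ⟨z', hz', rfl, -⟩ := exists_of_mul_of_letters_eq_cons hz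
  rw [← mul_assoc, ← map_mul, ha, map_one, one_mul, hz']

def EndsIn (z : CoprodI M) (i : ι) : Prop := ∃ T h, letters z = T ++ [⟨i, h⟩]

def StartsIn (z : CoprodI M) (i : ι) : Prop := ∃ h T, letters z = ⟨i, h⟩ :: T

theorem StartsIn.eq {z : CoprodI M} {i i' : ι} : StartsIn z i → StartsIn z i' → i = i' := by
  rintro ⟨h, T, hz⟩ ⟨h', T', hz'⟩
  exact congrArg Sigma.fst (List.cons.inj (hz.symm.trans hz')).1

end Monoid

variable {ι : Type*} [DecidableEq ι] {G : ι → Type*} [∀ i, Group (G i)] [∀ i, DecidableEq (G i)]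

theorem letters_eq_append_inv_or_endsIn_mul_of (z : CoprodI G) {i : ι} {a : G i} (ha : a ≠ 1) :
    (∃ T, letters z = T ++ [⟨i, a⁻¹⟩]) ∨ EndsIn (z * of a) i := by
  rcases List.eq_nil_or_concat (letters z) with hz | ⟨T, ⟨i', h⟩, hz⟩
  · rw [letters_eq_nil_iff.1 hz, one_mul]
    exact Or.inr ⟨[], a, letters_of ha⟩
  rw [List.concat_eq_append] at hz
  by_cases hi : i' = i
  · subst hi
    by_cases hha : h * a = 1
    · exact Or.inl ⟨T, by rw [hz, eq_inv_of_mul_eq_one_left hha]⟩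
    · exact Or.inr ⟨T, _, letters_mul_of_merge hz hha⟩
  · exact Or.inr ⟨_, _, letters_mul_of_append ha (by simpa [hz] using hi)⟩

end Monoid.CoprodI

open Monoid.CoprodI

def boolSign (s : Bool) : ℤ := cond s 1 (-1)

theorem boolSign_eq_one_or_neg_one (s : Bool) : boolSign s = 1 ∨ boolSign s = -1 := by
  cases s <;> simp [boolSign]

theorem boolSign_injective : Function.Injective boolSign := by
  intro s s'
  cases s <;> cases s' <;> simp [boolSign]

theorem eq_of_mul_boolSign_neg {e : ℤ} {s s' : Bool} (h : e * boolSign s < 0)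
    (h' : e * boolSign s' < 0) : s = s' := by
  cases s <;> cases s' <;> simp only [boolSign, cond_true, cond_false] at h h' <;>
    first | rfl | omega

section Generators

variable {ι : Type*} {G : ι → Type*} [∀ i, Group (G i)] {κ : Type*} {c : κ → ι}
  (g : ∀ j, G (c j))

def genHom : FreeGroup κ →* Monoid.CoprodI G := FreeGroup.lift fun j => of (g j)

theorem genHom_mk_append (L L' : List (κ × Bool)) :
    genHom g (FreeGroup.mk (L ++ L')) = genHom g (FreeGroup.mk L) * genHom g (FreeGroup.mk L') := by
  rw [← FreeGroup.mul_mk, map_mul]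

theorem genHom_mk_singleton (p : κ × Bool) :
    genHom g (FreeGroup.mk [p]) = of (g p.1 ^ boolSign p.2) := by
  obtain ⟨j, _ | _⟩ := p <;> simp [genHom, boolSign]

theorem genHom_mk_cons (p : κ × Bool) (L : List (κ × Bool)) :
    genHom g (FreeGroup.mk (p :: L)) = of (g p.1 ^ boolSign p.2) * genHom g (FreeGroup.mk L) := by
  rw [← List.singleton_append, genHom_mk_append, genHom_mk_singleton]

theorem genHom_mk_replicate (n : ℕ) (j : κ) (s : Bool) :
    genHom g (FreeGroup.mk (List.replicate n (j, s))) = of (g j ^ (n * boolSign s)) := by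
  induction n with
  | zero => rw [List.replicate_zero, ← FreeGroup.one_eq_mk]; simp
  | succ n ih =>
    rw [List.replicate_succ, genHom_mk_cons, ih, ← map_mul, ← zpow_add]
    push_cast
    ring_nf

theorem of_gen_zpow_mem_range (j : κ) (e : ℤ) : of (g j ^ e) ∈ (genHom g).range :=
  ⟨FreeGroup.of j ^ e, by simp [genHom]⟩

def IsGenPow (l : Σ i, G i) : Prop := ∃ j, ∃ e : ℤ, l = ⟨c j, g j ^ e⟩

variable {g}

theorem gen_zpow_ne_one (hg : ∀ j, ¬IsOfFinOrder (g j)) {j : κ} {e : ℤ} (he : e ≠ 0) :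
    g j ^ e ≠ 1 :=
  fun h => hg j (isOfFinOrder_iff_zpow_eq_one.2 ⟨e, he, h⟩)

theorem eq_of_gen_zpow_sigma_eq (hc : c.Injective) (hg : ∀ j, ¬IsOfFinOrder (g j)) {j j' : κ}
    {e e' : ℤ} (h : (⟨c j, g j ^ e⟩ : Σ i, G i) = ⟨c j', g j' ^ e'⟩) : j = j' ∧ e = e' := by
  obtain ⟨hjj, hee⟩ := Sigma.mk.inj_iff.1 h
  obtain rfl := hc hjj
  exact ⟨rfl, injective_zpow_iff_not_isOfFinOrder.2 (hg j) (eq_of_heq hee)⟩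

end Generators

section Cancellation

variable {ι : Type*} [DecidableEq ι] {G : ι → Type*} [∀ i, Group (G i)] [∀ i, DecidableEq (G i)]
  {κ : Type*} {c : κ → ι} (g : ∀ j, G (c j))

theorem forall_isGenPow_letters_of_mul (hc : c.Injective) {z : Monoid.CoprodI G}
    (hz : ∀ l ∈ letters z, IsGenPow g l) (j : κ) (e : ℤ) :
    ∀ l ∈ letters (of (g j ^ e) * z), IsGenPow g l := by
  by_cases he : g j ^ e = 1
  · rwa [he, map_one, one_mul]
  rcases hzl : letters z with _ | ⟨l₀, T⟩
  · rw [letters_eq_nil_iff.1 hzl, mul_one, letters_of he]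
    simpa using ⟨j, e, rfl⟩
  obtain ⟨j₀, e₀, rfl⟩ := hz l₀ (by simp [hzl])
  have hT : ∀ l ∈ T, IsGenPow g l := fun l hl => hz l (by simp [hzl, hl])
  by_cases hj : j₀ = j
  · subst hj
    by_cases hcancel : g j₀ ^ e * g j₀ ^ e₀ = 1
    · rwa [letters_of_mul_cancel hzl hcancel]
    · rw [letters_of_mul_merge hzl hcancel, ← zpow_add]
      exact List.forall_mem_cons.2 ⟨⟨j₀, e + e₀, rfl⟩, hT⟩
  · rw [letters_of_mul_cons he (by simpa [hzl] using fun h => hj (hc h)), hzl]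
    exact List.forall_mem_cons.2 ⟨⟨j, e, rfl⟩, hzl ▸ hz⟩

theorem mem_range_genHom_iff (hc : c.Injective) {z : Monoid.CoprodI G} :
    z ∈ (genHom g).range ↔ ∀ l ∈ letters z, IsGenPow g l := by
  constructor
  · classical
    rintro ⟨u, rfl⟩
    rw [← FreeGroup.mk_toWord (x := u)]
    induction u.toWord with
    | nil => simp [← FreeGroup.one_eq_mk, letters_one]
    | cons p L ih => rw [genHom_mk_cons]; exact forall_isGenPow_letters_of_mul g hc ih _ _
  · intro hz
    rw [← Word.equiv.symm_apply_apply z]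
    refine (genHom g).range.list_prod_mem fun a ha => ?_
    obtain ⟨l, hl, rfl⟩ := List.mem_map.1 ha
    obtain ⟨j, e, rfl⟩ := hz l hl
    exact of_gen_zpow_mem_range g j e

theorem startsIn_of_mul_mem_range (hc : c.Injective) {x z : Monoid.CoprodI G} {i : ι}
    (hxi : EndsIn x i) (hx : x ∉ (genHom g).range) (hz : z ≠ 1)
    (hxz : x * z ∈ (genHom g).range) : StartsIn z i := by
  obtain ⟨T, h, hxl⟩ := hxi
  rcases hzl : letters z with _ | ⟨⟨i', h'⟩, T'⟩
  · exact absurd (letters_eq_nil_iff.1 hzl) hz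
  by_cases hi : i' = i
  · exact hi ▸ ⟨h', T', hzl⟩
  refine absurd ((mem_range_genHom_iff g hc).2 fun l hl => ?_) hx
  have hmul : letters (x * z) = letters x ++ letters z :=
    letters_mul (by simpa [hxl, hzl] using Ne.symm hi)
  exact (mem_range_genHom_iff g hc).1 hxz l (hmul ▸ List.mem_append_left _ hl)

/-- Multiplying `x` on the right by the letters of `A` one at a time, each letter shortens the
current last syllable. -/
inductive AbsorbsRight : Monoid.CoprodI G → List (κ × Bool) → Prop
  | nil (x : Monoid.CoprodI G) : AbsorbsRight x []
  | cons {x : Monoid.CoprodI G} {A : List (κ × Bool)} (j : κ) (s : Bool) (e : ℤ)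
      (T : List (Σ i, G i)) (hx : letters x = T ++ [⟨c j, g j ^ e⟩]) (he : e * boolSign s < 0)
      (hA : AbsorbsRight (x * of (g j ^ boolSign s)) A) : AbsorbsRight x ((j, s) :: A)

/-- The mirror image of `AbsorbsRight`: the letters of `B`, last one first, shorten the current
first syllable of `y`. -/
inductive AbsorbsLeft : Monoid.CoprodI G → List (κ × Bool) → Prop
  | nil (y : Monoid.CoprodI G) : AbsorbsLeft y []
  | cons {y : Monoid.CoprodI G} {B : List (κ × Bool)} (j : κ) (s : Bool) (e : ℤ)
      (T : List (Σ i, G i)) (hy : letters y = ⟨c j, g j ^ e⟩ :: T) (he : e * boolSign s < 0)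
      (hB : AbsorbsLeft (of (g j ^ boolSign s) * y) B) : AbsorbsLeft y (B ++ [(j, s)])

variable {g}

theorem AbsorbsRight.eq_of_length_eq (hc : c.Injective) (hg : ∀ j, ¬IsOfFinOrder (g j))
    {x : Monoid.CoprodI G} {A A' : List (κ × Bool)} (h : AbsorbsRight g x A)
    (h' : AbsorbsRight g x A') (hlen : A.length = A'.length) : A = A' := by
  induction h generalizing A' with
  | nil => exact (List.length_eq_zero_iff.1 hlen.symm).symm
  | cons j s e T hx he _ ih =>
    cases h' with
    | nil => simp at hlen
    | cons j' s' e' T' hx' he' hA' =>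
      have hlast := congrArg List.getLast? (hx.symm.trans hx')
      rw [List.getLast?_concat, List.getLast?_concat] at hlast
      obtain ⟨rfl, rfl⟩ := eq_of_gen_zpow_sigma_eq hc hg (Option.some_injective _ hlast)
      obtain rfl := eq_of_mul_boolSign_neg he he'
      rw [ih hA' (by simpa using hlen)]

theorem AbsorbsLeft.eq_of_length_eq (hc : c.Injective) (hg : ∀ j, ¬IsOfFinOrder (g j))
    {y : Monoid.CoprodI G} {B B' : List (κ × Bool)} (h : AbsorbsLeft g y B)
    (h' : AbsorbsLeft g y B') (hlen : B.length = B'.length) : B = B' := by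
  induction h generalizing B' with
  | nil => exact (List.length_eq_zero_iff.1 hlen.symm).symm
  | cons j s e T hy he _ ih =>
    cases h' with
    | nil => simp at hlen
    | cons j' s' e' T' hy' he' hB' =>
      obtain ⟨rfl, rfl⟩ := eq_of_gen_zpow_sigma_eq hc hg (List.cons.inj (hy.symm.trans hy')).1
      obtain rfl := eq_of_mul_boolSign_neg he he'
      rw [ih hB' (by simpa using hlen)]

theorem AbsorbsRight.cons_of_isReduced (hc : c.Injective) (hg : ∀ j, ¬IsOfFinOrder (g j))
    {x : Monoid.CoprodI G} {j : κ} {s : Bool} {A : List (κ × Bool)}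
    (hA : AbsorbsRight g (x * of (g j ^ boolSign s)) A) (hne : A ≠ [])
    (hred : ∀ p ∈ A.head?, p.1 = j → p.2 = s) : AbsorbsRight g x ((j, s) :: A) := by
  have hx : x = x * of (g j ^ boolSign s) * of (g j ^ (-boolSign s)) := by
    rw [mul_assoc, ← map_mul, ← zpow_add, add_neg_cancel, zpow_zero, map_one, mul_one]
  have hsign := boolSign_eq_one_or_neg_one s
  cases hA with
  | nil => contradiction
  | cons j₁ s₁ e T hx₁ he hA =>
    by_cases hj : j₁ = j
    · subst hj
      obtain rfl : s₁ = s := hred _ rfl rfl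
      have hne : g j₁ ^ e * g j₁ ^ (-boolSign s₁) ≠ 1 := by
        rw [← zpow_add]
        exact gen_zpow_ne_one hg (by rcases hsign with h | h <;> rw [h] at he ⊢ <;> omega)
      refine .cons j₁ s₁ (e - boolSign s₁) T ?_ ?_ (.cons j₁ s₁ e T hx₁ he hA)
      · rw [hx, letters_mul_of_merge hx₁ hne, ← zpow_add, sub_eq_add_neg]
      · rcases hsign with h | h <;> rw [h] at he ⊢ <;> omega
    · refine .cons j s (-boolSign s) (T ++ [⟨c j₁, g j₁ ^ e⟩]) ?_ ?_ (.cons j₁ s₁ e T hx₁ he hA)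
      · have hne : g j ^ (-boolSign s) ≠ 1 :=
          gen_zpow_ne_one hg (by rcases hsign with h | h <;> rw [h] <;> omega)
        have hlast : ∀ l ∈ (letters (x * of (g j ^ boolSign s))).getLast?, l.1 ≠ c j := by
          rw [hx₁, List.getLast?_concat]
          rintro _ ⟨⟩
          exact fun h => hj (hc h)
        rw [hx, letters_mul_of_append hne hlast, hx₁, List.append_assoc, List.singleton_append]
      · rcases hsign with h | h <;> rw [h] <;> omega

theorem AbsorbsLeft.append {y : Monoid.CoprodI G} {B B' : List (κ × Bool)}
    (h : AbsorbsLeft g y B) (h' : AbsorbsLeft g (genHom g (FreeGroup.mk B) * y) B') :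
    AbsorbsLeft g y (B' ++ B) := by
  induction h with
  | nil y => simpa [← FreeGroup.one_eq_mk] using h'
  | cons j s e T hy he _ ih =>
    rw [genHom_mk_append, genHom_mk_singleton, mul_assoc] at h'
    rw [← List.append_assoc]
    exact .cons j s e T hy he (ih (by simpa using h'))

theorem absorbsLeft_replicate (hg : ∀ j, ¬IsOfFinOrder (g j)) {j : κ} {s : Bool} {n : ℕ}
    (hn : n ≠ 0) {z : Monoid.CoprodI G} {T : List (Σ i, G i)}
    (hz : letters z = ⟨c j, g j ^ (-(n * boolSign s))⟩ :: T) :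
    AbsorbsLeft g z (List.replicate n (j, s)) := by
  have hsign := boolSign_eq_one_or_neg_one s
  induction n generalizing z with
  | zero => contradiction
  | succ n ih =>
    rw [List.replicate_succ']
    refine .cons j s _ T hz (by rcases hsign with h | h <;> rw [h] <;> omega) ?_
    obtain rfl | hn' := eq_or_ne n 0
    · exact .nil _
    have hne : g j ^ boolSign s * g j ^ (-((n + 1 : ℕ) * boolSign s)) ≠ 1 := by
      rw [← zpow_add]
      exact gen_zpow_ne_one hg (by rcases hsign with h | h <;> rw [h] <;> omega)
    refine ih hn' ?_
    rw [letters_of_mul_merge hz hne, ← zpow_add]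
    congr 3
    push_cast
    ring

end Cancellation

section Splitting

variable {ι : Type*} [DecidableEq ι] {G : ι → Type*} [∀ i, Group (G i)] [∀ i, DecidableEq (G i)]
  {κ : Type*} {c : κ → ι}

structure Splitting (g : ∀ j, G (c j)) (x y : Monoid.CoprodI G) where
  left : List (κ × Bool)
  gen : κ
  sign : Bool
  len : ℕ
  right : List (κ × Bool)
  absorbsRight : AbsorbsRight g x left
  absorbsLeft : AbsorbsLeft g y right
  startsIn : len ≠ 0 → StartsIn (genHom g (FreeGroup.mk right) * y) (c gen)

namespace Splitting

variable {g : ∀ j, G (c j)} {x y : Monoid.CoprodI G} {j : κ} {s : Bool}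

def word (σ : Splitting g x y) : List (κ × Bool) :=
  σ.left ++ List.replicate σ.len (σ.gen, σ.sign) ++ σ.right

def code (σ : Splitting g x y) : ℕ × ℤ := (σ.left.length, σ.len * boolSign σ.sign)

theorem length_word (σ : Splitting g x y) :
    σ.word.length = σ.left.length + σ.len + σ.right.length := by
  simp [word, add_assoc]

def consLeft (σ : Splitting g (x * of (g j ^ boolSign s)) y)
    (h : AbsorbsRight g x ((j, s) :: σ.left)) : Splitting g x y :=
  { σ with left := (j, s) :: σ.left, absorbsRight := h }

def consMid (σ : Splitting g (x * of (g j ^ boolSign s)) y) (hlen : σ.len ≠ 0) :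
    Splitting g x y :=
  { σ with
    left := []
    len := σ.len + 1
    absorbsRight := .nil x
    startsIn := fun _ => σ.startsIn hlen }

theorem word_consMid (σ : Splitting g (x * of (g j ^ boolSign s)) y) (hlen : σ.len ≠ 0)
    (hleft : σ.left = []) (hgen : σ.gen = j) (hsign : σ.sign = s) :
    (σ.consMid hlen).word = (j, s) :: σ.word := by
  simp [word, consMid, hleft, hgen, hsign, List.replicate_succ]

def single (j : κ) (s : Bool) {B : List (κ × Bool)} (hB : AbsorbsLeft g y B)
    (hst : StartsIn (genHom g (FreeGroup.mk B) * y) (c j)) : Splitting g x y :=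
  ⟨[], j, s, 1, B, .nil x, hB, fun _ => hst⟩

theorem absorbsLeft_word (hc : c.Injective) (hg : ∀ j, ¬IsOfFinOrder (g j))
    (σ : Splitting g x y) (hleft : σ.left = []) (hgen : σ.len ≠ 0 → σ.gen ≠ j)
    (hst : StartsIn (genHom g (FreeGroup.mk σ.word) * y) (c j)) : AbsorbsLeft g y σ.word := by
  cases σ with
  | mk A i t n B _ hB hpin =>
    subst hleft
    simp only [word, List.nil_append] at hgen hst ⊢
    obtain rfl | hn := eq_or_ne n 0
    · simpa using hB
    obtain ⟨h, T, hright⟩ := hpin hn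
    rw [genHom_mk_append, genHom_mk_replicate, mul_assoc] at hst
    -- unless the middle block cancels the first syllable of `φ(B) y`, the product starts in the
    -- factor of `g i`, not in that of `g j`
    by_cases hcancel : g i ^ (n * boolSign t) * h = 1
    · rw [eq_inv_of_mul_eq_one_right hcancel, ← zpow_neg] at hright
      exact hB.append (absorbsLeft_replicate hg hn hright)
    · have hst' := letters_of_mul_merge hright hcancel
      exact absurd (hc (StartsIn.eq ⟨_, T, hst'⟩ hst)) (hgen hn)

theorem word_eq_of_code_eq (hc : c.Injective) (hg : ∀ j, ¬IsOfFinOrder (g j))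
    (σ σ' : Splitting g x y) (hlen : σ.word.length = σ'.word.length)
    (hcode : σ.code = σ'.code) : σ.word = σ'.word := by
  obtain ⟨hleft, hmid⟩ := Prod.mk.inj hcode
  have hsign := boolSign_eq_one_or_neg_one σ.sign
  have hsign' := boolSign_eq_one_or_neg_one σ'.sign
  have hn : σ.len = σ'.len := by
    rcases hsign with h | h <;> rcases hsign' with h' | h' <;> rw [h, h'] at hmid <;> omega
  have hA := σ.absorbsRight.eq_of_length_eq hc hg σ'.absorbsRight hleft
  have hB := σ.absorbsLeft.eq_of_length_eq hc hg σ'.absorbsLeft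
    (by rw [σ.length_word, σ'.length_word] at hlen; omega)
  have hM : List.replicate σ.len (σ.gen, σ.sign) = List.replicate σ'.len (σ'.gen, σ'.sign) := by
    obtain h0 | h0 := eq_or_ne σ.len 0
    · rw [← hn, h0, List.replicate_zero, List.replicate_zero]
    have hi : σ.gen = σ'.gen := hc ((hB ▸ σ.startsIn h0).eq (σ'.startsIn (hn ▸ h0)))
    rw [hn] at hmid
    have hs : σ.sign = σ'.sign :=
      boolSign_injective (mul_left_cancel₀ (by exact_mod_cast hn ▸ h0) hmid)
    rw [hn, hi, hs]
  simp only [word, hA, hM, hB]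

end Splitting

theorem exists_splitting [Nonempty κ] {g : ∀ j, G (c j)} (hc : c.Injective)
    (hg : ∀ j, ¬IsOfFinOrder (g j)) {y : Monoid.CoprodI G} (hy : y ∉ (genHom g).range)
    {L : List (κ × Bool)} (hL : FreeGroup.IsReduced L) {x : Monoid.CoprodI G}
    (hx : x ∉ (genHom g).range) (hxy : x * genHom g (FreeGroup.mk L) * y ∈ (genHom g).range) :
    ∃ σ : Splitting g x y, σ.word = L := by
  induction L generalizing x with
  | nil =>
    exact ⟨⟨[], Classical.arbitrary κ, true, 0, [], .nil x, .nil y, fun h => absurd rfl h⟩, rfl⟩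
  | cons p L ih =>
    obtain ⟨j, s⟩ := p
    set H := (genHom g).range
    have hred : ∀ q ∈ L.head?, q.1 = j → q.2 = s :=
      fun q hq hqj => ((List.isChain_cons.1 hL).1 q hq hqj.symm).symm
    have hx' : x * of (g j ^ boolSign s) ∉ H :=
      (H.mul_mem_cancel_right (of_gen_zpow_mem_range g j _)).not.2 hx
    have hxy' : x * of (g j ^ boolSign s) * genHom g (FreeGroup.mk L) * y ∈ H := by
      rwa [genHom_mk_cons, ← mul_assoc] at hxy
    obtain ⟨σ, rfl⟩ := ih hL.tail hx' hxy'
    have hsign := boolSign_eq_one_or_neg_one s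
    by_cases hleft : σ.left ≠ []
    · refine ⟨σ.consLeft (σ.absorbsRight.cons_of_isReduced hc hg hleft fun q hq => ?_), rfl⟩
      exact hred q (List.mem_head?_append_of_mem_head? (List.mem_head?_append_of_mem_head? hq))
    rw [not_not] at hleft
    by_cases hmid : σ.len ≠ 0 ∧ σ.gen = j
    · obtain ⟨m, hm⟩ := Nat.exists_eq_succ_of_ne_zero hmid.1
      have hhead : (σ.gen, σ.sign) ∈ σ.word.head? := by
        simp [Splitting.word, hleft, hm, List.replicate_succ]
      exact ⟨σ.consMid hmid.1, σ.word_consMid hmid.1 hleft hmid.2 (hred _ hhead hmid.2)⟩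
    have hgs : g j ^ boolSign s ≠ 1 :=
      gen_zpow_ne_one hg (by rcases hsign with h | h <;> rw [h] <;> omega)
    rcases letters_eq_append_inv_or_endsIn_mul_of x hgs with ⟨T, hT⟩ | hend
    · refine ⟨σ.consLeft (hleft ▸ .cons j s (-boolSign s) T (by rw [hT, zpow_neg]) ?_ (.nil _)),
        rfl⟩
      rcases hsign with h | h <;> rw [h] <;> omega
    · -- `x g_j^{±1}` ends in the factor of `g j`, so `φ(L) y` must start there
      have hz : genHom g (FreeGroup.mk σ.word) * y ≠ 1 := fun h =>
        hy (eq_inv_of_mul_eq_one_right h ▸ H.inv_mem ⟨_, rfl⟩)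
      have hst := startsIn_of_mul_mem_range g hc hend hx' hz (by rwa [← mul_assoc])
      exact ⟨.single j s (σ.absorbsLeft_word hc hg hleft (fun h0 h => hmid ⟨h0, h⟩) hst) hst,
        rfl⟩

end Splitting

theorem chi_n_card_le_general (m : ℕ) (G : Fin m → Type*) [∀ i, Group (G i)]
    (k : ℕ) (hk : 2 ≤ k) (hkm : k ≤ m)
    (g : (i : Fin k) → G (Fin.castLE hkm i))
    (hg : ∀ i, ¬ IsOfFinOrder (g i))
    (φ : FreeGroup (Fin k) →* Monoid.CoprodI G)
    (hφ : ∀ i : Fin k, φ (FreeGroup.of i) = Monoid.CoprodI.of (g i))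
    (x y : Monoid.CoprodI G)
    (hx : x ∉ Set.range φ) (hy : y ∉ Set.range φ) (n : ℕ) :
    {u : Fk k | wlen u = n ∧ x * φ u * y ∈ Set.range φ}.Finite ∧
    Nat.card {u : Fk k | wlen u = n ∧ x * φ u * y ∈ Set.range φ} ≤
      (n + 1) * (2 * n + 1) := by
  classical
  obtain rfl : φ = genHom g := FreeGroup.ext_hom _ _ fun j => by simp [hφ, genHom]
  have : Nonempty (Fin k) := ⟨⟨0, by omega⟩⟩
  set S := {u : Fk k | wlen u = n ∧ x * genHom g u * y ∈ Set.range (genHom g)}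
  choose σ hσ using fun u : S => exists_splitting (Fin.castLE_injective hkm) hg hy
    FreeGroup.isReduced_toWord hx (by rw [FreeGroup.mk_toWord]; exact u.2.2)
  have hlen (u : S) : (σ u).word.length = n := (congrArg List.length (hσ u)).trans u.2.1
  let F := Finset.range (n + 1) ×ˢ Finset.Icc (-n : ℤ) n
  let code (u : S) : F := ⟨(σ u).code, by
    have := (σ u).length_word ▸ hlen u
    rcases boolSign_eq_one_or_neg_one (σ u).sign with h | h <;>
      simp only [F, Splitting.code, h, Finset.mem_product, Finset.mem_range, Finset.mem_Icc] <;>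
      omega⟩
  have hcode : Function.Injective code := fun u u' h => by
    refine Subtype.ext (FreeGroup.toWord_injective ?_)
    rw [← hσ, ← hσ]
    exact Splitting.word_eq_of_code_eq (Fin.castLE_injective hkm) hg _ _
      ((hlen u).trans (hlen u').symm) (congrArg Subtype.val h)
  have : Finite S := Finite.of_injective code hcode
  refine ⟨Set.toFinite S, (Nat.card_le_card_of_injective code hcode).trans ?_⟩
  simp only [Nat.card_eq_fintype_card, Fintype.card_coe, F, Finset.card_product,
    Finset.card_range, Int.card_Icc]
  rw [show ((n : ℤ) + 1 - -n).toNat = 2 * n + 1 by omega]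

/-- let `G = G_1 * ⋯ * G_m` be a free product of groups (`m ≥ 2`), with
`g_i ∈ G_i` (`1 ≤ i ≤ k`, `2 ≤ k ≤ m`) of infinite order, and let `φ : F_k → G` be the
(injective) homomorphism sending the `i`-th free generator to the canonical image of
`g_i` in `G`.  If `x, y ∈ G` with `x, y ∉ φ(F_k)`, then for every `n ≥ 0` the set
`χ_n = {u ∈ F_k : |u| = n and x·φ(u)·y ∈ φ(F_k)}` is finite with cardinality at most
`(n+1)(2n+1)`. -/
theorem chi_n_card_le (m : ℕ) (hm : 2 ≤ m) (G : Fin m → Type*) [∀ i, Group (G i)]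
    (k : ℕ) (hk : 2 ≤ k) (hkm : k ≤ m)
    (g : (i : Fin k) → G (Fin.castLE hkm i))
    (hg : ∀ i, ¬ IsOfFinOrder (g i))
    (φ : FreeGroup (Fin k) →* Monoid.CoprodI G)
    (hφ : ∀ i : Fin k, φ (FreeGroup.of i) = Monoid.CoprodI.of (g i))
    (hinj : Function.Injective φ)
    (x y : Monoid.CoprodI G)
    (hx : x ∉ Set.range φ) (hy : y ∉ Set.range φ) (n : ℕ) :
    {u : Fk k | wlen u = n ∧ x * φ u * y ∈ Set.range φ}.Finite ∧
    Nat.card {u : Fk k | wlen u = n ∧ x * φ u * y ∈ Set.range φ} ≤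
      (n + 1) * (2 * n + 1) :=
  chi_n_card_le_general m G k hk hkm g hg φ hφ x y hx hy n
end
end
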